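/- Let G be a finite simple graph on n vertices, w a positive edge-weight function with the unique hop-minimal shortest-path property, s a vertex, and u a vertex connected to s in G with u ≠ s. Then |New(s,u)| · (|New(s,u)| − 1) ≤ 2n; in particular |New(s,u)| ≤ √(2n) + 1. -/

import Mathlib

open SimpleGraph

/-- The total `w`-weight of a walk. -/
def walkWeight {V : Type*} {G : SimpleGraph V} (w : Sym2 V → ℝ) {u v : V}
    (p : G.Walk u v) : ℝ :=
  (p.edges.map w).sum

/-- `p` is a `w`-shortest path from `u` to `v` in `H`. (When `w` has the unique
hop-minimal shortest-path property, such a path is the unique path `π_H(u,v)`.) -/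
def IsMinPath {V : Type*} (H : SimpleGraph V) (w : Sym2 V → ℝ) {u v : V}
    (p : H.Walk u v) : Prop :=
  p.IsPath ∧ ∀ q : H.Walk u v, q.IsPath → walkWeight w p ≤ walkWeight w q

/-- `w` has the unique hop-minimal shortest-path property on `G`. -/
def UniqueHopMinimal {V : Type*} (G : SimpleGraph V) (w : Sym2 V → ℝ) : Prop :=
  ∀ H : SimpleGraph V, H ≤ G → ∀ u v : V, H.Reachable u v →
    ∃ p : H.Walk u v, p.IsPath ∧
      (∀ q : H.Walk u v, q.IsPath → q ≠ p → walkWeight w p < walkWeight w q) ∧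
      (∀ q : H.Walk u v, q.IsPath → p.length ≤ q.length)

/-- `T₀(s)`: the set of edges lying on some `w`-shortest path from `s` in `G`. -/
def bfsEdges {V : Type*} (G : SimpleGraph V) (w : Sym2 V → ℝ) (s : V) : Set (Sym2 V) :=
  {e | ∃ (v : V) (p : G.Walk s v), IsMinPath G w p ∧ e ∈ p.edges}

/-- `New(s,u)`: the last edges of the replacement paths `π_{G∖e}(s,u)`, over failed
edges `e ∈ T₀(s)` with `s`, `u` still connected in `G∖e`, excluding edges of `T₀(s)`. -/
def newEdges {V : Type*} (G : SimpleGraph V) (w : Sym2 V → ℝ) (s u : V) :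
    Set (Sym2 V) :=
  {e' | e' ∉ bfsEdges G w s ∧ ∃ e ∈ bfsEdges G w s,
    ∃ p : (G.deleteEdges {e}).Walk s u, IsMinPath (G.deleteEdges {e}) w p ∧
      p.edges.getLast? = some e'}

namespace NEP

open SimpleGraph.Walk List

variable {V : Type*}

lemma walkWeight_append {G : SimpleGraph V} (w : Sym2 V → ℝ) {a b c : V} (p : G.Walk a b)
    (q : G.Walk b c) : walkWeight w (p.append q) = walkWeight w p + walkWeight w q := by
  simp [walkWeight, Walk.edges_append]

lemma walkWeight_transfer {G H : SimpleGraph V} (w : Sym2 V → ℝ) {a b : V} (p : G.Walk a b)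
    (hp : ∀ e ∈ p.edges, e ∈ H.edgeSet) :
    walkWeight w (p.transfer H hp) = walkWeight w p := by
  simp [walkWeight, Walk.edges_transfer]

lemma walkWeight_nonneg {H : SimpleGraph V} {w : Sym2 V → ℝ}
    (hw : ∀ e ∈ H.edgeSet, 0 ≤ w e) {a b : V} (p : H.Walk a b) : 0 ≤ walkWeight w p := by
  apply List.sum_nonneg
  intro x hx
  obtain ⟨e, he, rfl⟩ := List.mem_map.1 hx
  exact hw e (p.edges_subset_edgeSet he)

lemma walkWeight_bypass_le [DecidableEq V] {H : SimpleGraph V} {w : Sym2 V → ℝ}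
    (hw : ∀ e ∈ H.edgeSet, 0 ≤ w e) {a b : V} (p : H.Walk a b) :
    walkWeight w p.bypass ≤ walkWeight w p := by
  induction p with
  | nil => simp [Walk.bypass]
  | @cons uu vv ww h p ih =>
    simp only [Walk.bypass]
    split_ifs with hb
    · calc walkWeight w (p.bypass.dropUntil uu hb)
          ≤ walkWeight w p.bypass := by
            conv_rhs => rw [← Walk.take_spec p.bypass hb]
            rw [walkWeight_append]
            have := walkWeight_nonneg hw (p.bypass.takeUntil uu hb)
            linarith
        _ ≤ walkWeight w p := ih
        _ ≤ walkWeight w (Walk.cons h p) := by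
            have : 0 ≤ w s(uu, vv) := hw _ (H.mem_edgeSet.2 h)
            simp only [walkWeight, Walk.edges_cons, List.map_cons, List.sum_cons]
            linarith
    · simp only [walkWeight, Walk.edges_cons, List.map_cons, List.sum_cons]
      have := ih
      simp only [walkWeight] at this
      linarith

lemma exists_path_weight_le {H : SimpleGraph V} {w : Sym2 V → ℝ}
    (hw : ∀ e ∈ H.edgeSet, 0 ≤ w e) {a b : V} (p : H.Walk a b) :
    ∃ q : H.Walk a b, q.IsPath ∧ walkWeight w q ≤ walkWeight w p := by
  classical
  exact ⟨p.bypass, p.bypass_isPath, walkWeight_bypass_le hw p⟩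

lemma exists_isMinPath {G : SimpleGraph V} {w : Sym2 V → ℝ} (huhm : UniqueHopMinimal G w)
    {H : SimpleGraph V} (hle : H ≤ G) {a b : V} (hr : H.Reachable a b) :
    ∃ p : H.Walk a b, IsMinPath H w p := by
  obtain ⟨p, hp, hstrict, -⟩ := huhm H hle a b hr
  refine ⟨p, hp, fun q hq => ?_⟩
  rcases eq_or_ne q p with rfl | hne
  · exact le_refl _
  · exact (hstrict q hq hne).le

lemma isMinPath_unique {G : SimpleGraph V} {w : Sym2 V → ℝ} (huhm : UniqueHopMinimal G w)
    {H : SimpleGraph V} (hle : H ≤ G) {a b : V} {p q : H.Walk a b}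
    (hp : IsMinPath H w p) (hq : IsMinPath H w q) : p = q := by
  obtain ⟨p₀, hp₀, hstrict, -⟩ := huhm H hle a b ⟨p⟩
  have h1 : p = p₀ := by
    by_contra hne
    exact absurd (hp.2 p₀ hp₀) (not_le.2 (hstrict p hp.1 hne))
  have h2 : q = p₀ := by
    by_contra hne
    exact absurd (hq.2 p₀ hp₀) (not_le.2 (hstrict q hq.1 hne))
  rw [h1, h2]

lemma isMinPath_hopmin {G : SimpleGraph V} {w : Sym2 V → ℝ} (huhm : UniqueHopMinimal G w)
    {H : SimpleGraph V} (hle : H ≤ G) {a b : V} {p : H.Walk a b}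
    (hp : IsMinPath H w p) : ∀ q : H.Walk a b, q.IsPath → p.length ≤ q.length := by
  obtain ⟨p₀, hp₀, hstrict, hhop⟩ := huhm H hle a b ⟨p⟩
  have h1 : p = p₀ := by
    by_contra hne
    exact absurd (hp.2 p₀ hp₀) (not_le.2 (hstrict p hp.1 hne))
  rw [h1]
  exact hhop

lemma isMinPath_append_parts {H : SimpleGraph V} {w : Sym2 V → ℝ}
    (hw : ∀ e ∈ H.edgeSet, 0 ≤ w e) {a b c : V} {p₁ : H.Walk a b} {p₂ : H.Walk b c}
    (h : IsMinPath H w (p₁.append p₂)) : IsMinPath H w p₁ ∧ IsMinPath H w p₂ := by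
  constructor
  · refine ⟨h.1.of_append_left, fun q hq => ?_⟩
    by_contra hlt
    push_neg at hlt
    obtain ⟨q', hq', hle'⟩ := exists_path_weight_le hw (q.append p₂)
    have := h.2 q' hq'
    rw [walkWeight_append] at hle' this
    linarith
  · refine ⟨h.1.of_append_right, fun q hq => ?_⟩
    by_contra hlt
    push_neg at hlt
    obtain ⟨q', hq', hle'⟩ := exists_path_weight_le hw (p₁.append q)
    have := h.2 q' hq'
    rw [walkWeight_append] at hle' this
    linarith


section Helpers
variable {V : Type*}

lemma getLast?_append_of_ne_nil {α : Type*} {l₁ l₂ : List α} (h : l₂ ≠ []) :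
    (l₁ ++ l₂).getLast? = l₂.getLast? := by
  rw [List.getLast?_append]
  cases hl : l₂.getLast? with
  | none => exact absurd (List.getLast?_eq_none_iff.1 hl) h
  | some a => simp

lemma exists_last_split {G : SimpleGraph V} (S : Set V) {a b : V} (p : G.Walk a b)
    (hhit : ∃ v ∈ p.support, v ∈ S) :
    ∃ (x : V) (_ : x ∈ S) (p₁ : G.Walk a x) (p₂ : G.Walk x b),
      p = p₁.append p₂ ∧ ∀ v ∈ p₂.support, v ∈ S → v = x := by
  induction p with
  | nil =>
    obtain ⟨v, hv, hvS⟩ := hhit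
    simp only [Walk.support_nil, List.mem_singleton] at hv
    subst hv
    exact ⟨v, hvS, Walk.nil, Walk.nil, rfl, by simp⟩
  | @cons a c b h p ih =>
    by_cases hhit' : ∃ v ∈ p.support, v ∈ S
    · obtain ⟨x, hxS, p₁, p₂, hdec, hprop⟩ := ih hhit'
      exact ⟨x, hxS, Walk.cons h p₁, p₂, by rw [Walk.cons_append, ← hdec], hprop⟩
    · have haS : a ∈ S := by
        obtain ⟨v, hv, hvS⟩ := hhit
        rw [Walk.support_cons, List.mem_cons] at hv
        rcases hv with rfl | hv
        · exact hvS
        · exact absurd ⟨v, hv, hvS⟩ hhit'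
      refine ⟨a, haS, Walk.nil, Walk.cons h p, rfl, fun v hv hvS => ?_⟩
      rw [Walk.support_cons, List.mem_cons] at hv
      rcases hv with rfl | hv
      · rfl
      · exact absurd ⟨v, hv, hvS⟩ hhit'

lemma edges_eq_single_of_mem {G : SimpleGraph V} {x u : V} {T : G.Walk x u} (hT : T.IsPath)
    (he : s(x, u) ∈ T.edges) : T.edges = [s(x, u)] := by
  cases T with
  | nil => simp at he
  | @cons _ c _ h p =>
    rw [Walk.edges_cons, List.mem_cons] at he
    rcases he with he | he
    · have hcu : c = u := (Sym2.congr_right.1 he).symm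
      subst hcu
      have hp : p.IsPath := ((Walk.cons_isPath_iff _ _).1 hT).1
      have : p = Walk.nil := Walk.isPath_iff_eq_nil.1 hp
      subst this
      simp
    · exact absurd (Walk.fst_mem_support_of_mem_edges p he)
        ((Walk.cons_isPath_iff _ _).1 hT).2

lemma one_le_length_of_ne {G : SimpleGraph V} {x u : V} (T : G.Walk x u) (h : x ≠ u) :
    1 ≤ T.length := by
  cases T with
  | nil => exact absurd rfl h
  | cons _ q => simp [Nat.succ_le_succ]

lemma isPath_append {G : SimpleGraph V} {a b c : V} {p : G.Walk a b} {q : G.Walk b c}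
    (hp : p.IsPath) (hq : q.IsPath) (hj : ∀ v ∈ p.support, v ∈ q.support → v = b) :
    (p.append q).IsPath := by
  rw [Walk.isPath_def, Walk.support_append, List.nodup_append]
  refine ⟨hp.support_nodup, hq.support_nodup.sublist (List.tail_sublist _), ?_⟩
  intro v hv v' hv' hvv'
  rw [← hvv'] at hv'
  have hvq : v ∈ q.support := (List.tail_sublist _).subset hv'
  have : v = b := hj v hv hvq
  subst this
  have := hq.support_nodup
  rw [q.support_eq_cons] at this
  exact (List.nodup_cons.1 this).1 hv'

lemma support_getLast {G : SimpleGraph V} {a b : V} (p : G.Walk a b) :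
    p.support.getLast (p.support_ne_nil) = b := by
  induction p with
  | nil => rfl
  | cons h q ih =>
    have : (Walk.cons h q).support.getLast ((Walk.cons h q).support_ne_nil)
        = q.support.getLast q.support_ne_nil := by
      simp only [Walk.support_cons]
      exact List.getLast_cons q.support_ne_nil
    rw [this, ih]

lemma end_not_mem_takeUntil [DecidableEq V] {G : SimpleGraph V} {s u x : V} {π : G.Walk s u}
    (hπ : π.IsPath) (hx : x ∈ π.support) (hxu : x ≠ u) :
    u ∉ (π.takeUntil x hx).support := by
  intro hu
  have hspec := π.take_spec hx
  have hnd : π.support.Nodup := hπ.support_nodup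
  rw [← hspec, Walk.support_append, List.nodup_append] at hnd
  have hu2 : u ∈ (π.dropUntil x hx).support := Walk.end_mem_support _
  rw [(π.dropUntil x hx).support_eq_cons, List.mem_cons] at hu2
  rcases hu2 with h | h
  · exact hxu h.symm
  · exact hnd.2.2 u hu u h rfl

lemma eq_of_takeUntil_length_eq [DecidableEq V] {G : SimpleGraph V} {x y s t : V}
    (p : G.Walk s t) (hx : x ∈ p.support) (hy : y ∈ p.support)
    (hlen : (p.takeUntil x hx).length = (p.takeUntil y hy).length)
    (hcomp : (∃ q : G.Walk x y, p.takeUntil y hy = (p.takeUntil x hx).append q) ∨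
      (∃ q : G.Walk y x, p.takeUntil x hx = (p.takeUntil y hy).append q)) : x = y := by
  rcases hcomp with ⟨q, hq⟩ | ⟨q, hq⟩
  · rw [hq, Walk.length_append] at hlen
    have h0 : q.length = 0 := by omega
    cases q with
    | nil => rfl
    | cons h q => simp at h0
  · rw [hq, Walk.length_append] at hlen
    have h0 : q.length = 0 := by omega
    cases q with
    | nil => rfl
    | cons h q => simp at h0

lemma innerFinset_card [DecidableEq V] {G : SimpleGraph V} {x u : V} {T : G.Walk x u}
    (hT : T.IsPath) (hlen : 1 ≤ T.length) :
    T.support.tail.dropLast.toFinset.card + 1 = T.length := by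
  have hnd : T.support.tail.dropLast.Nodup :=
    hT.support_nodup.sublist ((List.dropLast_sublist _).trans (List.tail_sublist _))
  rw [List.toFinset_card_of_nodup hnd, List.length_dropLast, List.length_tail,
    Walk.length_support]
  omega

lemma mem_innerFinset [DecidableEq V] {G : SimpleGraph V} {x u : V} {T : G.Walk x u}
    (hT : T.IsPath) {v : V} (hv : v ∈ T.support.tail.dropLast.toFinset) :
    v ∈ T.support ∧ v ≠ x ∧ v ≠ u := by
  rw [List.mem_toFinset] at hv
  have hvtail : v ∈ T.support.tail := (List.dropLast_sublist _).subset hv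
  have hvsup : v ∈ T.support := (List.tail_sublist _).subset hvtail
  have hnd := hT.support_nodup
  have hxt : x ∉ T.support.tail := by
    rw [T.support_eq_cons] at hnd
    exact (List.nodup_cons.1 hnd).1
  refine ⟨hvsup, fun h => hxt (h ▸ hvtail), fun h => ?_⟩
  have htne : T.support.tail ≠ [] := by
    intro h0
    rw [h0] at hvtail
    simp at hvtail
  have hlast : T.support.tail.getLast htne = u := by
    have h1 : T.support.getLast? = some u := by
      rw [List.getLast?_eq_getLast T.support_ne_nil, support_getLast]
    have h2 : T.support.tail.getLast? = some u := by
      rw [← getLast?_append_of_ne_nil (l₁ := [x]) htne, List.singleton_append,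
        ← T.support_eq_cons]
      exact h1
    have h3 := List.getLast?_eq_getLast htne
    rw [h2] at h3
    exact (Option.some.inj h3).symm
  have hdec : T.support.tail = T.support.tail.dropLast ++ [T.support.tail.getLast htne] :=
    (List.dropLast_append_getLast htne).symm
  have hndt : T.support.tail.Nodup := hnd.sublist (List.tail_sublist _)
  rw [hdec, List.nodup_append] at hndt
  exact hndt.2.2 v hv v (by rw [hlast]; simp [h]) rfl

lemma counting {α : Type*} [DecidableEq α] [Fintype V] [DecidableEq V] (N : Finset α)
    (pos t : α → ℕ) (I : α → Finset V)
    (hcard : ∀ f ∈ N, (I f).card + 1 = t f)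
    (hinj : ∀ f ∈ N, ∀ g ∈ N, pos f = pos g → f = g)
    (hmono : ∀ f ∈ N, ∀ g ∈ N, pos f < pos g → pos g + t g ≤ pos f + t f)
    (hdisj : ∀ f ∈ N, ∀ g ∈ N, f ≠ g → Disjoint (I f) (I g)) :
    N.card * (N.card - 1) ≤ 2 * Fintype.card V := by
  set k := N.card with hk
  set r : α → ℕ := fun f => (N.filter fun g => pos f < pos g).card with hr
  -- r f + 1 ≤ t f
  have hrt : ∀ f ∈ N, r f + 1 ≤ t f := by
    intro f hf
    rcases Finset.eq_empty_or_nonempty (N.filter fun g => pos f < pos g) with hemp | hne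
    · have : r f = 0 := by rw [hr]; simp [hemp]
      rw [this]
      have := hcard f hf
      omega
    · obtain ⟨g, hg, hgmax⟩ := Finset.exists_max_image _ pos hne
      have hgN : g ∈ N := (Finset.mem_filter.1 hg).1
      have hfg : pos f < pos g := (Finset.mem_filter.1 hg).2
      -- the image of the filter under pos is inside Icc (pos f + 1) (pos g)
      have himg : ((N.filter fun g' => pos f < pos g').image pos) ⊆
          Finset.Icc (pos f + 1) (pos g) := by
        intro m hm
        obtain ⟨g', hg', rfl⟩ := Finset.mem_image.1 hm
        rw [Finset.mem_Icc]
        exact ⟨(Finset.mem_filter.1 hg').2, hgmax g' hg'⟩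
      have hcardimg : ((N.filter fun g' => pos f < pos g').image pos).card = r f := by
        rw [hr]
        apply Finset.card_image_of_injOn
        intro a ha b hb hab
        exact hinj a (Finset.mem_filter.1 ha).1 b (Finset.mem_filter.1 hb).1 hab
      have h1 : r f ≤ pos g - pos f := by
        have := Finset.card_le_card himg
        rw [hcardimg, Nat.card_Icc] at this
        omega
      have h2 := hmono f hf g hgN hfg
      have h3 := hcard g hgN
      omega
  -- r is injective on N
  have hrinj : ∀ f ∈ N, ∀ g ∈ N, f ≠ g → r f ≠ r g := by
    intro f hf g hg hfg
    rcases lt_trichotomy (pos f) (pos g) with h | h | h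
    · have hss : (N.filter fun g' => pos g < pos g') ⊂ (N.filter fun g' => pos f < pos g') := by
        constructor
        · intro a ha
          rw [Finset.mem_filter] at ha ⊢
          exact ⟨ha.1, lt_trans h ha.2⟩
        · intro hsub
          have : g ∈ N.filter fun g' => pos g < pos g' :=
            hsub (Finset.mem_filter.2 ⟨hg, h⟩)
          exact absurd (Finset.mem_filter.1 this).2 (lt_irrefl _)
      have := Finset.card_lt_card hss
      simp only [hr]
      omega
    · exact absurd (hinj f hf g hg h) hfg
    · have hss : (N.filter fun g' => pos f < pos g') ⊂ (N.filter fun g' => pos g < pos g') := by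
        constructor
        · intro a ha
          rw [Finset.mem_filter] at ha ⊢
          exact ⟨ha.1, lt_trans h ha.2⟩
        · intro hsub
          have : f ∈ N.filter fun g' => pos f < pos g' :=
            hsub (Finset.mem_filter.2 ⟨hf, h⟩)
          exact absurd (Finset.mem_filter.1 this).2 (lt_irrefl _)
      have := Finset.card_lt_card hss
      simp only [hr]
      omega
  -- r f ≤ k - 1, in fact image of r = range k
  have hrk : ∀ f ∈ N, r f < k := by
    intro f hf
    rw [hr, hk]
    have : (N.filter fun g => pos f < pos g) ⊆ N.erase f := by
      intro a ha
      rw [Finset.mem_erase]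
      rw [Finset.mem_filter] at ha
      refine ⟨fun h => ?_, ha.1⟩
      subst h
      exact absurd ha.2 (lt_irrefl _)
    calc (N.filter fun g => pos f < pos g).card ≤ (N.erase f).card := Finset.card_le_card this
      _ < N.card := Finset.card_erase_lt_of_mem hf
  have himgr : N.image r = Finset.range k := by
    apply Finset.eq_of_subset_of_card_le
    · intro m hm
      obtain ⟨f, hf, rfl⟩ := Finset.mem_image.1 hm
      rw [Finset.mem_range]
      exact hrk f hf
    · rw [Finset.card_range]
      rw [Finset.card_image_of_injOn]
      intro a ha b hb hab
      by_contra hne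
      exact hrinj a ha b hb hne hab
  have hsumr : ∑ f ∈ N, r f = ∑ i ∈ Finset.range k, i := by
    rw [← himgr, Finset.sum_image]
    intro a ha b hb hab
    by_contra hne
    exact hrinj a ha b hb hne hab
  -- sum of inner cards bounded by card V
  have hsumI : ∑ f ∈ N, (I f).card ≤ Fintype.card V := by
    rw [← Finset.card_biUnion (fun f hf g hg hfg => hdisj f hf g hg hfg)]
    exact Finset.card_le_card (Finset.subset_univ _) |>.trans (le_of_eq (Finset.card_univ))
  have hsum2 : ∑ f ∈ N, (r f + 1) ≤ ∑ f ∈ N, t f := Finset.sum_le_sum hrt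
  have hsum3 : ∑ f ∈ N, t f = ∑ f ∈ N, ((I f).card + 1) := by
    apply Finset.sum_congr rfl
    intro f hf
    exact (hcard f hf).symm
  have hgauss := Finset.sum_range_id_mul_two k
  have hsplit : ∑ f ∈ N, (r f + 1) = (∑ f ∈ N, r f) + k := by
    rw [Finset.sum_add_distrib, Finset.sum_const, smul_eq_mul, mul_one]
  have hsplit2 : ∑ f ∈ N, ((I f).card + 1) = (∑ f ∈ N, (I f).card) + k := by
    rw [Finset.sum_add_distrib, Finset.sum_const, smul_eq_mul, mul_one]
  have : ∑ i ∈ Finset.range k, i ≤ Fintype.card V := by omega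
  omega

section TU
variable {V : Type*} [DecidableEq V]
lemma takeUntil_cons_self {G : SimpleGraph V} {a c b : V} (h : G.Adj a c) (p : G.Walk c b)
    (hmem : a ∈ (Walk.cons h p).support) : (Walk.cons h p).takeUntil a hmem = Walk.nil := by
  simp [Walk.takeUntil]

lemma takeUntil_cons_ne {G : SimpleGraph V} {a c b x : V} (h : G.Adj a c) (p : G.Walk c b)
    (hmem : x ∈ (Walk.cons h p).support) (hne : a ≠ x) :
    ∃ hm : x ∈ p.support, (Walk.cons h p).takeUntil x hmem = Walk.cons h (p.takeUntil x hm) := by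
  have hm : x ∈ p.support := by
    rw [Walk.support_cons, List.mem_cons] at hmem
    rcases hmem with rfl | hm
    · exact absurd rfl hne
    · exact hm
  exact ⟨hm, by simp [Walk.takeUntil, hne]⟩

lemma takeUntil_comparable {G : SimpleGraph V} {x y : V} {s t : V} (p : G.Walk s t) :
    ∀ (hx : x ∈ p.support) (hy : y ∈ p.support),
    (∃ q : G.Walk x y, p.takeUntil y hy = (p.takeUntil x hx).append q) ∨
    (∃ q : G.Walk y x, p.takeUntil x hx = (p.takeUntil y hy).append q) := by
  induction p with
  | nil =>
    intro hx hy
    rw [Walk.mem_support_nil_iff] at hx hy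
    subst hx; subst hy
    exact Or.inl ⟨Walk.nil, (Walk.append_nil _).symm⟩
  | @cons a c b h p ih =>
    intro hx hy
    by_cases hax : a = x
    · subst hax
      left
      exact ⟨(Walk.cons h p).takeUntil y hy, by rw [takeUntil_cons_self, Walk.nil_append]⟩
    · by_cases hay : a = y
      · subst hay
        right
        exact ⟨(Walk.cons h p).takeUntil x hx, by rw [takeUntil_cons_self, Walk.nil_append]⟩
      · obtain ⟨hmx, ex⟩ := takeUntil_cons_ne h p hx hax
        obtain ⟨hmy, ey⟩ := takeUntil_cons_ne h p hy hay
        rcases ih hmx hmy with ⟨q, hq⟩ | ⟨q, hq⟩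
        · exact Or.inl ⟨q, by rw [ex, ey, hq, Walk.cons_append]⟩
        · exact Or.inr ⟨q, by rw [ex, ey, hq, Walk.cons_append]⟩

end TU
end Helpers

section Main
variable {V : Type*} [DecidableEq V]

def Gadget {G : SimpleGraph V} (w : Sym2 V → ℝ) {s u : V} (π : G.Walk s u)
    (f e : Sym2 V) {x : V} (hx : x ∈ π.support) (T : (G.deleteEdges {e}).Walk x u) : Prop :=
  x ≠ u ∧
  IsMinPath (G.deleteEdges {e}) w T ∧
  (∀ e' ∈ T.edges, e' ∉ π.edges) ∧
  (∀ v ∈ T.support, v ∈ π.support → v = x ∨ v = u) ∧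
  T.edges.getLast? = some f ∧
  e ∈ π.edges ∧
  e ∉ (π.takeUntil x hx).edges ∧
  ∀ q : (G.deleteEdges {e}).Walk s u, q.IsPath →
    (π.takeUntil x hx).length + T.length ≤ q.length

lemma hwH_of {G : SimpleGraph V} {w : Sym2 V → ℝ} (hpos : ∀ e ∈ G.edgeSet, 0 < w e)
    (E : Set (Sym2 V)) : ∀ e' ∈ (G.deleteEdges E).edgeSet, 0 ≤ w e' := by
  intro e' h'
  rw [edgeSet_deleteEdges] at h'
  exact (hpos e' h'.1).le

lemma struct {G : SimpleGraph V} {w : Sym2 V → ℝ}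
    (hpos : ∀ e ∈ G.edgeSet, 0 < w e) (huhm : UniqueHopMinimal G w)
    {s u : V} (hne : u ≠ s) {π : G.Walk s u} (hπ : IsMinPath G w π)
    {f : Sym2 V} (hf : f ∈ newEdges G w s u) :
    ∃ (e : Sym2 V) (x : V) (hx : x ∈ π.support) (T : (G.deleteEdges {e}).Walk x u),
      Gadget w π f e hx T := by
  obtain ⟨hfnew, e, he, P, hPmin, hPlast⟩ := hf
  have hwG : ∀ e' ∈ G.edgeSet, 0 ≤ w e' := fun e' h' => (hpos e' h').le
  have hHle : G.deleteEdges {e} ≤ G := G.deleteEdges_le _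
  have hwH : ∀ e' ∈ (G.deleteEdges {e}).edgeSet, 0 ≤ w e' := hwH_of hpos _
  have hbfs : ∀ e' ∈ π.edges, e' ∈ bfsEdges G w s := fun e' h' => ⟨u, π, hπ, h'⟩
  -- the failed edge lies on π
  have heπ : e ∈ π.edges := by
    by_contra heπ
    have hsub : ∀ e' ∈ π.edges, e' ∈ (G.deleteEdges {e}).edgeSet := by
      intro e' h'
      rw [edgeSet_deleteEdges]
      exact ⟨π.edges_subset_edgeSet h', fun hh => heπ (by rwa [← Set.mem_singleton_iff.1 hh])⟩
    have hπ'min : IsMinPath (G.deleteEdges {e}) w (π.transfer _ hsub) := by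
      refine ⟨hπ.1.transfer hsub, fun q hq => ?_⟩
      rw [walkWeight_transfer]
      have hq' : ∀ e'' ∈ q.edges, e'' ∈ G.edgeSet := fun e'' h'' =>
        edgeSet_mono hHle (q.edges_subset_edgeSet h'')
      have := hπ.2 (q.transfer G hq') (hq.transfer hq')
      rwa [walkWeight_transfer] at this
    have hPπ : P = π.transfer _ hsub := isMinPath_unique huhm hHle hPmin hπ'min
    rw [hPπ, Walk.edges_transfer] at hPlast
    exact hfnew (hbfs f (List.mem_of_mem_getLast? hPlast))
  -- split off the final excursion T
  obtain ⟨x, hxS, P₁, T, hdec, hTprop⟩ := exists_last_split {v | v ∈ π.support ∧ v ≠ u} P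
      ⟨s, P.start_mem_support, π.start_mem_support, hne.symm⟩
  obtain ⟨hxπ, hxu⟩ := hxS
  have hT5 : ∀ v ∈ T.support, v ∈ π.support → v = x ∨ v = u := by
    intro v hv hvπ
    by_cases hvu : v = u
    · exact Or.inr hvu
    · exact Or.inl (hTprop v hv ⟨hvπ, hvu⟩)
  have hPdec : IsMinPath (G.deleteEdges {e}) w (P₁.append T) := by rw [← hdec]; exact hPmin
  obtain ⟨hP₁min, hTmin⟩ := isMinPath_append_parts hwH hPdec
  have hTne : T.edges ≠ [] := by
    intro h0
    have h1 := one_le_length_of_ne T hxu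
    rw [← Walk.length_edges, h0] at h1
    simp at h1
  have hT6 : T.edges.getLast? = some f := by
    rw [hdec, Walk.edges_append, getLast?_append_of_ne_nil hTne] at hPlast
    exact hPlast
  -- T avoids all edges of π
  have hT4 : ∀ e' ∈ T.edges, e' ∉ π.edges := by
    intro e' he'T he'π
    obtain ⟨⟨a, b⟩, rfl⟩ := e'.exists_rep
    have ha1 : a ∈ T.support := Walk.fst_mem_support_of_mem_edges T he'T
    have hb1 : b ∈ T.support := Walk.snd_mem_support_of_mem_edges T he'T
    have ha2 : a ∈ π.support := Walk.fst_mem_support_of_mem_edges π he'π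
    have hb2 : b ∈ π.support := Walk.snd_mem_support_of_mem_edges π he'π
    have hab : a ≠ b := (π.adj_of_mem_edges he'π).ne
    have key : s(a, b) = s(x, u) → False := by
      intro he2
      have hedges := edges_eq_single_of_mem hTmin.1 (he2 ▸ he'T)
      have hf' : f = s(x, u) := by
        rw [hedges] at hT6
        simpa using hT6.symm
      exact hfnew (hbfs f (by rw [hf', ← he2]; exact he'π))
    rcases hT5 a ha1 ha2 with hax | hau <;> rcases hT5 b hb1 hb2 with hbx | hbu
    · exact hab (hax.trans hbx.symm)
    · exact key (by rw [hax, hbu])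
    · exact key (by rw [hau, hbx, Sym2.eq_swap])
    · exact hab (hau.trans hbu.symm)
  -- the failed edge is not on the prefix of π before x
  have hπdec : IsMinPath G w ((π.takeUntil x hxπ).append (π.dropUntil x hxπ)) := by
    rw [π.take_spec hxπ]; exact hπ
  obtain ⟨hπ₁min, hπ₂min⟩ := isMinPath_append_parts hwG hπdec
  have hπ₂ne : (π.dropUntil x hxπ).edges ≠ [] := by
    intro h0
    have h1 := one_le_length_of_ne (π.dropUntil x hxπ) hxu
    rw [← Walk.length_edges, h0] at h1
    simp at h1
  have hπlast : π.edges.getLast? = (π.dropUntil x hxπ).edges.getLast? := by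
    conv_lhs => rw [← π.take_spec hxπ]
    rw [Walk.edges_append, getLast?_append_of_ne_nil hπ₂ne]
  have h8 : e ∉ (π.takeUntil x hxπ).edges := by
    intro h8
    have hπnodup : π.edges.Nodup := hπ.1.isTrail.edges_nodup
    have hπnodup' : ((π.takeUntil x hxπ).edges ++ (π.dropUntil x hxπ).edges).Nodup := by
      rw [← Walk.edges_append, π.take_spec hxπ]; exact hπnodup
    have heπ₂ : e ∉ (π.dropUntil x hxπ).edges :=
      fun hh => (List.disjoint_of_nodup_append hπnodup') h8 hh
    have hsub₂ : ∀ e' ∈ (π.dropUntil x hxπ).edges, e' ∈ (G.deleteEdges {e}).edgeSet := by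
      intro e' h'
      rw [edgeSet_deleteEdges]
      refine ⟨π.edges_subset_edgeSet (π.edges_dropUntil_subset hxπ h'), fun hh => ?_⟩
      exact heπ₂ (by rwa [Set.mem_singleton_iff.1 hh] at h')
    have hsubTG : ∀ e' ∈ T.edges, e' ∈ G.edgeSet := fun e' h' =>
      edgeSet_mono hHle (T.edges_subset_edgeSet h')
    have c1 : walkWeight w T ≤ walkWeight w (π.dropUntil x hxπ) := by
      have := hTmin.2 ((π.dropUntil x hxπ).transfer _ hsub₂) (hπ₂min.1.transfer hsub₂)
      rwa [walkWeight_transfer] at this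
    have c2 : walkWeight w (π.dropUntil x hxπ) ≤ walkWeight w T := by
      have := hπ₂min.2 (T.transfer G hsubTG) (hTmin.1.transfer hsubTG)
      rwa [walkWeight_transfer] at this
    have hπ₂'min : IsMinPath (G.deleteEdges {e}) w ((π.dropUntil x hxπ).transfer _ hsub₂) := by
      refine ⟨hπ₂min.1.transfer hsub₂, fun q hq => ?_⟩
      rw [walkWeight_transfer]
      exact le_trans c2 (hTmin.2 q hq)
    have hTeq : T = (π.dropUntil x hxπ).transfer _ hsub₂ :=
      isMinPath_unique huhm hHle hTmin hπ₂'min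
    have : (π.dropUntil x hxπ).edges.getLast? = some f := by
      rw [← Walk.edges_transfer _ hsub₂, ← hTeq]; exact hT6
    exact hfnew (hbfs f (List.mem_of_mem_getLast? (by rw [hπlast]; exact this)))
  -- upgrade: P = (π.takeUntil x) ++ T, giving the hop count of P
  have hsub₁ : ∀ e' ∈ (π.takeUntil x hxπ).edges, e' ∈ (G.deleteEdges {e}).edgeSet := by
    intro e' h'
    rw [edgeSet_deleteEdges]
    refine ⟨π.edges_subset_edgeSet (π.edges_takeUntil_subset hxπ h'), fun hh => ?_⟩
    exact h8 (by rwa [Set.mem_singleton_iff.1 hh] at h')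
  have hπ₁path : (π.takeUntil x hxπ).IsPath := hπ.1.takeUntil hxπ
  have hQpath : (((π.takeUntil x hxπ).transfer _ hsub₁).append T).IsPath := by
    apply isPath_append (hπ₁path.transfer hsub₁) hTmin.1
    intro v hv hv'
    rw [Walk.support_transfer] at hv
    rcases hT5 v hv' (π.support_takeUntil_subset hxπ hv) with h | h
    · exact h
    · exact absurd (h ▸ hv) (end_not_mem_takeUntil hπ.1 hxπ hxu)
  have hP₁path : P₁.IsPath := hPdec.1.of_append_left
  have hsubP₁G : ∀ e' ∈ P₁.edges, e' ∈ G.edgeSet := fun e' h' =>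
    edgeSet_mono hHle (P₁.edges_subset_edgeSet h')
  have hw1 : walkWeight w (π.takeUntil x hxπ) ≤ walkWeight w P₁ := by
    have := hπ₁min.2 (P₁.transfer G hsubP₁G) (hP₁path.transfer hsubP₁G)
    rwa [walkWeight_transfer] at this
  have hQw : walkWeight w (((π.takeUntil x hxπ).transfer _ hsub₁).append T)
      ≤ walkWeight w P := by
    rw [walkWeight_append, walkWeight_transfer, hdec, walkWeight_append]
    linarith
  have hQmin : IsMinPath (G.deleteEdges {e}) w
      (((π.takeUntil x hxπ).transfer _ hsub₁).append T) :=
    ⟨hQpath, fun q hq => le_trans hQw (hPmin.2 q hq)⟩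
  have hQP : ((π.takeUntil x hxπ).transfer _ hsub₁).append T = P :=
    isMinPath_unique huhm hHle hQmin hPmin
  have hhop : ∀ q : (G.deleteEdges {e}).Walk s u, q.IsPath →
      (π.takeUntil x hxπ).length + T.length ≤ q.length := by
    intro q hq
    have h1 := isMinPath_hopmin huhm hHle hPmin q hq
    have h2 : P.length = (π.takeUntil x hxπ).length + T.length := by
      rw [← hQP, Walk.length_append, Walk.length_transfer]
    omega
  exact ⟨e, x, hxπ, T, hxu, hTmin, hT4, hT5, hT6, heπ, h8, hhop⟩

section Pairwise
variable {V : Type*} [DecidableEq V] {G : SimpleGraph V} {w : Sym2 V → ℝ} {s u : V} {π : G.Walk s u}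
  {f g e₁ e₂ : Sym2 V} {x₁ x₂ : V} {hx₁ : x₁ ∈ π.support} {hx₂ : x₂ ∈ π.support}
  {T₁ : (G.deleteEdges {e₁}).Walk x₁ u} {T₂ : (G.deleteEdges {e₂}).Walk x₂ u}

lemma gadget_shared (hpos : ∀ e ∈ G.edgeSet, 0 < w e) (huhm : UniqueHopMinimal G w)
    (h₁ : Gadget w π f e₁ hx₁ T₁) (h₂ : Gadget w π g e₂ hx₂ T₂)
    {v : V} (hv₁ : v ∈ T₁.support) (hv₂ : v ∈ T₂.support) (hvu : v ≠ u) : f = g := by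
  obtain ⟨hxu₁, hT₁min, hT₁e, -, hT₁l, he₁π, -, -⟩ := h₁
  obtain ⟨hxu₂, hT₂min, hT₂e, -, hT₂l, he₂π, -, -⟩ := h₂
  have hU₁dec : IsMinPath (G.deleteEdges {e₁}) w
      ((T₁.takeUntil v hv₁).append (T₁.dropUntil v hv₁)) := by
    rw [T₁.take_spec hv₁]; exact hT₁min
  have hU₂dec : IsMinPath (G.deleteEdges {e₂}) w
      ((T₂.takeUntil v hv₂).append (T₂.dropUntil v hv₂)) := by
    rw [T₂.take_spec hv₂]; exact hT₂min
  have hU₁min := (isMinPath_append_parts (hwH_of hpos _) hU₁dec).2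
  have hU₂min := (isMinPath_append_parts (hwH_of hpos _) hU₂dec).2
  have hU₁ne : (T₁.dropUntil v hv₁).edges ≠ [] := by
    intro h0
    have h1 := one_le_length_of_ne (T₁.dropUntil v hv₁) hvu
    rw [← Walk.length_edges, h0] at h1
    simp at h1
  have hU₂ne : (T₂.dropUntil v hv₂).edges ≠ [] := by
    intro h0
    have h1 := one_le_length_of_ne (T₂.dropUntil v hv₂) hvu
    rw [← Walk.length_edges, h0] at h1
    simp at h1
  have hU₁l : (T₁.dropUntil v hv₁).edges.getLast? = some f := by
    rw [← hT₁l]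
    conv_rhs => rw [← T₁.take_spec hv₁]
    rw [Walk.edges_append, getLast?_append_of_ne_nil hU₁ne]
  have hU₂l : (T₂.dropUntil v hv₂).edges.getLast? = some g := by
    rw [← hT₂l]
    conv_rhs => rw [← T₂.take_spec hv₂]
    rw [Walk.edges_append, getLast?_append_of_ne_nil hU₂ne]
  have hsub21 : ∀ e' ∈ (T₂.dropUntil v hv₂).edges, e' ∈ (G.deleteEdges {e₁}).edgeSet := by
    intro e' h'
    have h'T₂ : e' ∈ T₂.edges := T₂.edges_dropUntil_subset hv₂ h'
    rw [edgeSet_deleteEdges]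
    refine ⟨edgeSet_mono (G.deleteEdges_le _) (T₂.edges_subset_edgeSet h'T₂), fun hh => ?_⟩
    exact hT₂e e' h'T₂ (Set.mem_singleton_iff.1 hh ▸ he₁π)
  have hsub12 : ∀ e' ∈ (T₁.dropUntil v hv₁).edges, e' ∈ (G.deleteEdges {e₂}).edgeSet := by
    intro e' h'
    have h'T₁ : e' ∈ T₁.edges := T₁.edges_dropUntil_subset hv₁ h'
    rw [edgeSet_deleteEdges]
    refine ⟨edgeSet_mono (G.deleteEdges_le _) (T₁.edges_subset_edgeSet h'T₁), fun hh => ?_⟩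
    exact hT₁e e' h'T₁ (Set.mem_singleton_iff.1 hh ▸ he₂π)
  have c1 : walkWeight w (T₁.dropUntil v hv₁) ≤ walkWeight w (T₂.dropUntil v hv₂) := by
    have := hU₁min.2 ((T₂.dropUntil v hv₂).transfer _ hsub21) (hU₂min.1.transfer hsub21)
    rwa [walkWeight_transfer] at this
  have c2 : walkWeight w (T₂.dropUntil v hv₂) ≤ walkWeight w (T₁.dropUntil v hv₁) := by
    have := hU₂min.2 ((T₁.dropUntil v hv₁).transfer _ hsub12) (hU₁min.1.transfer hsub12)
    rwa [walkWeight_transfer] at this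
  have hU₂'min : IsMinPath (G.deleteEdges {e₁}) w ((T₂.dropUntil v hv₂).transfer _ hsub21) := by
    refine ⟨hU₂min.1.transfer hsub21, fun q hq => ?_⟩
    rw [walkWeight_transfer]
    exact le_trans c2 (hU₁min.2 q hq)
  have hUeq : T₁.dropUntil v hv₁ = (T₂.dropUntil v hv₂).transfer _ hsub21 :=
    isMinPath_unique huhm (G.deleteEdges_le _) hU₁min hU₂'min
  have : some f = some g := by
    rw [← hU₁l, hUeq, Walk.edges_transfer, hU₂l]
  exact Option.some.inj this

lemma gadget_x_eq (hpos : ∀ e ∈ G.edgeSet, 0 < w e) (huhm : UniqueHopMinimal G w)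
    (h₁ : Gadget w π f e₁ hx₁ T₁) (h₂ : Gadget w π g e₂ hx₂ T₂)
    (hxx : x₁ = x₂) : f = g := by
  subst hxx
  exact gadget_shared hpos huhm h₁ h₂ T₁.start_mem_support T₂.start_mem_support h₁.1

lemma gadget_hop (hpos : ∀ e ∈ G.edgeSet, 0 < w e) (hπ : IsMinPath G w π)
    (h₁ : Gadget w π f e₁ hx₁ T₁) (h₂ : Gadget w π g e₂ hx₂ T₂)
    (hlt : (π.takeUntil x₁ hx₁).length < (π.takeUntil x₂ hx₂).length) :
    (π.takeUntil x₂ hx₂).length + T₂.length ≤ (π.takeUntil x₁ hx₁).length + T₁.length := by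
  obtain ⟨hxu₁, hT₁min, hT₁e, hT₁s, -, he₁π, -, -⟩ := h₁
  obtain ⟨hxu₂, hT₂min, -, -, -, he₂π, h₂8, h₂hop⟩ := h₂
  have hpre : ∃ q : G.Walk x₁ x₂, π.takeUntil x₂ hx₂ = (π.takeUntil x₁ hx₁).append q := by
    rcases takeUntil_comparable π hx₁ hx₂ with h | ⟨q, hq⟩
    · exact h
    · exfalso; rw [hq, Walk.length_append] at hlt; omega
  obtain ⟨q, hq⟩ := hpre
  have hesub : ∀ e' ∈ (π.takeUntil x₁ hx₁).edges, e' ∈ (π.takeUntil x₂ hx₂).edges := by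
    intro e' h'
    rw [hq, Walk.edges_append]
    exact List.mem_append_left _ h'
  have hsubπ₁ : ∀ e' ∈ (π.takeUntil x₁ hx₁).edges, e' ∈ (G.deleteEdges {e₂}).edgeSet := by
    intro e' h'
    rw [edgeSet_deleteEdges]
    refine ⟨π.edges_subset_edgeSet (π.edges_takeUntil_subset hx₁ h'), fun hh => ?_⟩
    exact h₂8 (Set.mem_singleton_iff.1 hh ▸ hesub e' h')
  have hsubT₁ : ∀ e' ∈ T₁.edges, e' ∈ (G.deleteEdges {e₂}).edgeSet := by
    intro e' h'
    rw [edgeSet_deleteEdges]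
    refine ⟨edgeSet_mono (G.deleteEdges_le _) (T₁.edges_subset_edgeSet h'), fun hh => ?_⟩
    exact hT₁e e' h' (Set.mem_singleton_iff.1 hh ▸ he₂π)
  have hQpath : (((π.takeUntil x₁ hx₁).transfer _ hsubπ₁).append
      (T₁.transfer _ hsubT₁)).IsPath := by
    apply isPath_append ((hπ.1.takeUntil hx₁).transfer hsubπ₁) (hT₁min.1.transfer hsubT₁)
    intro v hv hv'
    rw [Walk.support_transfer] at hv hv'
    rcases hT₁s v hv' (π.support_takeUntil_subset hx₁ hv) with h | h
    · exact h
    · exact absurd (h ▸ hv) (end_not_mem_takeUntil hπ.1 hx₁ hxu₁)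
  have := h₂hop _ hQpath
  rwa [Walk.length_append, Walk.length_transfer, Walk.length_transfer] at this
end Pairwise

end Main
end NEP

/-- `|New(s,u)|·(|New(s,u)| − 1) ≤ 2n`; in particular `|New(s,u)| ≤ √(2n) + 1`. -/
theorem newEdges_card_le_sqrt {V : Type*} [Fintype V]
    (G : SimpleGraph V) (w : Sym2 V → ℝ)
    (hpos : ∀ e ∈ G.edgeSet, 0 < w e) (huhm : UniqueHopMinimal G w)
    (s u : V) (hconn : G.Reachable s u) (hne : u ≠ s) :
    (newEdges G w s u).ncard * ((newEdges G w s u).ncard - 1) ≤ 2 * Fintype.card V ∧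
    ((newEdges G w s u).ncard : ℝ) ≤ Real.sqrt (2 * (Fintype.card V : ℝ)) + 1 := by
  classical
  obtain ⟨π, hπ⟩ := NEP.exists_isMinPath huhm le_rfl hconn
  have hkey : ∀ f : Sym2 V, f ∈ newEdges G w s u →
      ∃ (e : Sym2 V) (x : V) (hx : x ∈ π.support) (T : (G.deleteEdges {e}).Walk x u),
        NEP.Gadget w π f e hx T := fun f hf => NEP.struct hpos huhm hne hπ hf
  choose E X hX T hG using hkey
  have hfin : (newEdges G w s u).Finite := Set.toFinite _
  have hN : (newEdges G w s u).ncard = hfin.toFinset.card :=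
    Set.ncard_eq_toFinset_card _ hfin
  set pos : Sym2 V → ℕ := fun f =>
    if h : f ∈ newEdges G w s u then (π.takeUntil (X f h) (hX f h)).length else 0 with hpos'
  set tf : Sym2 V → ℕ := fun f =>
    if h : f ∈ newEdges G w s u then (T f h).length else 1 with htf'
  set If : Sym2 V → Finset V := fun f =>
    if h : f ∈ newEdges G w s u then (T f h).support.tail.dropLast.toFinset else ∅ with hIf'
  have main : hfin.toFinset.card * (hfin.toFinset.card - 1) ≤ 2 * Fintype.card V := by
    apply NEP.counting hfin.toFinset pos tf If
    · intro f hf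
      rw [Set.Finite.mem_toFinset] at hf
      simp only [hpos', htf', hIf', dif_pos hf]
      exact NEP.innerFinset_card (hG f hf).2.1.1 (NEP.one_le_length_of_ne _ (hG f hf).1)
    · intro f hf g hg hpe
      rw [Set.Finite.mem_toFinset] at hf hg
      simp only [hpos', dif_pos hf, dif_pos hg] at hpe
      have hxx : X f hf = X g hg :=
        NEP.eq_of_takeUntil_length_eq π (hX f hf) (hX g hg) hpe
          (NEP.takeUntil_comparable π (hX f hf) (hX g hg))
      exact NEP.gadget_x_eq hpos huhm (hG f hf) (hG g hg) hxx
    · intro f hf g hg hlt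
      rw [Set.Finite.mem_toFinset] at hf hg
      simp only [hpos', htf', dif_pos hf, dif_pos hg] at hlt ⊢
      exact NEP.gadget_hop hpos hπ (hG f hf) (hG g hg) hlt
    · intro f hf g hg hfg
      rw [Set.Finite.mem_toFinset] at hf hg
      simp only [hIf', dif_pos hf, dif_pos hg]
      rw [Finset.disjoint_left]
      intro v hv1 hv2
      obtain ⟨hs1, hx1, hu1⟩ := NEP.mem_innerFinset (hG f hf).2.1.1 hv1
      obtain ⟨hs2, hx2, hu2⟩ := NEP.mem_innerFinset (hG g hg).2.1.1 hv2
      exact hfg (NEP.gadget_shared hpos huhm (hG f hf) (hG g hg) hs1 hs2 hu1)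
  refine ⟨by rw [hN]; exact main, ?_⟩
  rw [hN]
  set k := hfin.toFinset.card with hk
  rcases Nat.eq_zero_or_pos k with h0 | h1
  · rw [h0]
    have := Real.sqrt_nonneg (2 * (Fintype.card V : ℝ))
    push_cast
    linarith
  · have h4 : ((k - 1 : ℕ) : ℝ) = (k : ℝ) - 1 := by
      rw [Nat.cast_sub h1]; simp
    have hsq : ((k : ℝ) - 1) ^ 2 ≤ 2 * (Fintype.card V : ℝ) := by
      have h2 : (k - 1) * (k - 1) ≤ k * (k - 1) := Nat.mul_le_mul_right _ (Nat.sub_le _ _)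
      have h3 : (k - 1) * (k - 1) ≤ 2 * Fintype.card V := le_trans h2 main
      calc ((k : ℝ) - 1) ^ 2 = ((k - 1 : ℕ) : ℝ) * ((k - 1 : ℕ) : ℝ) := by rw [h4]; ring
        _ ≤ ((2 * Fintype.card V : ℕ) : ℝ) := by exact_mod_cast h3
        _ = 2 * (Fintype.card V : ℝ) := by push_cast; ring
    have hs : (k : ℝ) - 1 ≤ Real.sqrt (2 * (Fintype.card V : ℝ)) :=
      Real.le_sqrt_of_sq_le hsq
    linarith
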